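/- Let d ≥ 1 be an integer and let h ∈ ℝ^d with h ≠ 0. Then, with Ψ₁(u) = ∏_{i=1}^{d} sinc(u_i/4)⁴: (i) Ψ₁(h) ≤ 256·d²/‖h‖₂⁴; (ii) for every coordinate u ∈ {1, …, d}, |(∂_u Ψ₁)(h)| ≤ 512·d²/‖h‖₂⁴; (iii) for all coordinates u, v ∈ {1, …, d}, |(∂_u∂_v Ψ₁)(h)| ≤ 1024·d²/‖h‖₂⁴. -/

import Mathlib

/-!
Ψ₁ is a product of the one-variable factors `φ(t) = sinc (t / 4) ^ 4`, so each partial derivative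
of order at most two is again a product `∏ j, g j (h j)` in which every `g j` is `φ`, `φ'` or
`φ''`. Since `sinc`, `sinc'` and `sinc''` are bounded and decay like `1 / |s|`, each such factor
satisfies `|g t| ≤ c` and `t ^ 4 * |g t| ≤ 256 * c`, with `c = 1, 2, 4` for `φ, φ', φ''`. Pick a
coordinate with `h i ^ 2 ≥ ‖h‖ ^ 2 / d`; bounding that factor by `256 * c / h i ^ 4` and the
others by their constants gives the claims, the constants multiplying to `1`, `2` and `4`.
-/

/-- The cardinal sine function: `sinc z = sin z / z` for `z ≠ 0`, `sinc 0 = 1`. -/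
noncomputable def sinc (x : ℝ) : ℝ := if x = 0 then 1 else Real.sin x / x

/-- The sinc-4 kernel (bandwidth one) on `ℝ^d`. -/
noncomputable def Psi1 (d : ℕ) (u : EuclideanSpace ℝ (Fin d)) : ℝ :=
  ∏ i, sinc (u i / 4) ^ 4

open Real hiding sinc
open Filter Topology Function

theorem sinc_eq_real_sinc : sinc = Real.sinc := rfl

lemma sq_mul_sin_add_mul_cos_le (a b x : ℝ) : (a * sin x + b * cos x) ^ 2 ≤ a ^ 2 + b ^ 2 := by
  nlinarith [sin_sq_add_cos_sq x, sq_nonneg (a * cos x - b * sin x)]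

lemma abs_mul_cos_sub_sin_add_cube_le {x : ℝ} (hx : |x| ≤ 1) :
    |x * cos x - sin x + x ^ 3 / 3| ≤ |x| ^ 5 / 10 := by
  have hc := Real.cos_bound hx
  have hs := Real.sin_bound hx
  calc |x * cos x - sin x + x ^ 3 / 3|
      = |x * (cos x - (1 - x ^ 2 / 2)) - (sin x - (x - x ^ 3 / 6))| := by ring_nf
    _ ≤ |x| * |cos x - (1 - x ^ 2 / 2)| + |sin x - (x - x ^ 3 / 6)| := by
        rw [← abs_mul]; exact abs_sub _ _
    _ ≤ |x| * (|x| ^ 4 * (5 / 96)) + |x| ^ 5 / 100 := by gcongr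
    _ ≤ |x| ^ 5 / 10 := by nlinarith [pow_nonneg (abs_nonneg x) 5]

lemma abs_mul_cos_sub_sin_le {x : ℝ} (hx : |x| ≤ 1) : |x * cos x - sin x| ≤ |x| ^ 3 / 2 := by
  have h5 : |x| ^ 5 ≤ |x| ^ 3 := pow_le_pow_of_le_one (abs_nonneg x) hx (by norm_num)
  calc |x * cos x - sin x| = |(x * cos x - sin x + x ^ 3 / 3) - x ^ 3 / 3| := by ring_nf
    _ ≤ |x * cos x - sin x + x ^ 3 / 3| + |x ^ 3 / 3| := abs_sub _ _
    _ ≤ |x| ^ 5 / 10 + |x| ^ 3 / 3 := by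
        gcongr
        · exact abs_mul_cos_sub_sin_add_cube_le hx
        · rw [abs_div, abs_pow]; norm_num
    _ ≤ |x| ^ 3 / 2 := by linarith [pow_nonneg (abs_nonneg x) 3]

lemma hasDerivAt_zero_of_abs_sub_le {g : ℝ → ℝ} {a C : ℝ}
    (h : ∀ᶠ y in 𝓝 0, |g y - g 0 - a * y| ≤ C * y ^ 2) : HasDerivAt g a 0 := by
  rw [hasDerivAt_iff_isLittleO]
  refine Asymptotics.IsBigO.trans_isLittleO ?_
    ((Asymptotics.isLittleO_pow_id one_lt_two).congr_right ?_)
  · refine Asymptotics.IsBigO.of_bound C ?_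
    filter_upwards [h] with y hy
    simpa [mul_comm a, abs_of_nonneg (sq_nonneg y)] using hy
  · simp

noncomputable def sincDeriv (x : ℝ) : ℝ :=
  if x = 0 then 0 else (x * cos x - sin x) / x ^ 2

noncomputable def sincDeriv2 (x : ℝ) : ℝ :=
  if x = 0 then -1 / 3 else ((2 - x ^ 2) * sin x - 2 * x * cos x) / x ^ 3

lemma sincDeriv_of_ne_zero {x : ℝ} (hx : x ≠ 0) : sincDeriv x = (x * cos x - sin x) / x ^ 2 :=
  if_neg hx

lemma sincDeriv2_of_ne_zero {x : ℝ} (hx : x ≠ 0) :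
    sincDeriv2 x = ((2 - x ^ 2) * sin x - 2 * x * cos x) / x ^ 3 :=
  if_neg hx

theorem hasDerivAt_sinc (x : ℝ) : HasDerivAt sinc (sincDeriv x) x := by
  rcases eq_or_ne x 0 with rfl | hx
  · refine hasDerivAt_zero_of_abs_sub_le (C := 1 / 6) (Eventually.of_forall fun y => ?_)
    rcases eq_or_ne y 0 with rfl | hy
    · simp
    rw [sinc_eq_real_sinc, Real.sinc_of_ne_zero hy, Real.sinc_zero, sincDeriv, if_pos rfl,
      zero_mul, sub_zero, div_sub_one hy, abs_div, div_le_iff₀ (abs_pos.2 hy), abs_sub_comm]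
    calc |y - sin y| ≤ |y| ^ 3 / 6 := Real.abs_sub_sin_le y
      _ = 1 / 6 * y ^ 2 * |y| := by rw [← sq_abs y]; ring
  · have hsinc : sinc =ᶠ[𝓝 x] fun y => sin y / y := by
      filter_upwards [eventually_ne_nhds hx] with y hy
      exact Real.sinc_of_ne_zero hy
    refine ((hasDerivAt_sin x).div (hasDerivAt_id x) hx).congr_of_eventuallyEq hsinc
      |>.congr_deriv ?_
    rw [sincDeriv_of_ne_zero hx, id]
    ring

theorem hasDerivAt_sincDeriv (x : ℝ) : HasDerivAt sincDeriv (sincDeriv2 x) x := by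
  rcases eq_or_ne x 0 with rfl | hx
  · refine hasDerivAt_zero_of_abs_sub_le (C := 1 / 10) ?_
    filter_upwards [Metric.closedBall_mem_nhds (0 : ℝ) one_pos] with y hy
    rw [Metric.mem_closedBall, dist_zero_right, Real.norm_eq_abs] at hy
    rcases eq_or_ne y 0 with rfl | hy0
    · simp
    rw [sincDeriv_of_ne_zero hy0, sincDeriv, if_pos rfl, sincDeriv2, if_pos rfl,
      show (y * cos y - sin y) / y ^ 2 - 0 - -1 / 3 * y = (y * cos y - sin y + y ^ 3 / 3) / y ^ 2
        by field_simp; ring,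
      abs_div, abs_pow, div_le_iff₀ (by positivity)]
    calc |y * cos y - sin y + y ^ 3 / 3| ≤ |y| ^ 5 / 10 := abs_mul_cos_sub_sin_add_cube_le hy
      _ ≤ 1 / 10 * y ^ 2 * |y| ^ 2 := by
        rw [← sq_abs y]
        nlinarith [pow_le_pow_of_le_one (abs_nonneg y) hy (show 4 ≤ 5 by norm_num),
          pow_nonneg (abs_nonneg y) 4]
  · have hsincDeriv : sincDeriv =ᶠ[𝓝 x] fun y => (y * cos y - sin y) / y ^ 2 := by
      filter_upwards [eventually_ne_nhds hx] with y hy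
      exact sincDeriv_of_ne_zero hy
    have h := (((hasDerivAt_id x).mul (hasDerivAt_cos x)).sub (hasDerivAt_sin x)).div
      (hasDerivAt_pow 2 x) (pow_ne_zero 2 hx)
    refine (h.congr_of_eventuallyEq hsincDeriv).congr_deriv ?_
    rw [sincDeriv2_of_ne_zero hx]
    simp only [Pi.sub_apply, Pi.mul_apply, id]
    field_simp
    ring

def PowDecayBound (n : ℕ) (c C : ℝ) (g : ℝ → ℝ) : Prop :=
  ∀ s, |g s| ≤ c ∧ |s| ^ n * |g s| ≤ C

namespace PowDecayBound

variable {m n : ℕ} {a b c c' A B C C' : ℝ} {f g : ℝ → ℝ}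

lemma of_abs_le_one (hsmall : ∀ s, |s| ≤ 1 → |g s| ≤ c)
    (hlarge : ∀ s, 1 ≤ |s| → |s| ^ n * |g s| ≤ c) : PowDecayBound n c c g := by
  intro s
  rcases le_total |s| 1 with hs | hs
  · have hpow : |s| ^ n ≤ 1 := pow_le_one₀ (abs_nonneg s) hs
    exact ⟨hsmall s hs, (mul_le_of_le_one_left (abs_nonneg _) hpow).trans (hsmall s hs)⟩
  · exact ⟨(le_mul_of_one_le_left (abs_nonneg _) (one_le_pow₀ hs)).trans (hlarge s hs),
      hlarge s hs⟩

lemma mono (hg : PowDecayBound n c C g) (hc : c ≤ c') (hC : C ≤ C') :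
    PowDecayBound n c' C' g :=
  fun s => ⟨(hg s).1.trans hc, (hg s).2.trans hC⟩

lemma mul (hf : PowDecayBound m a A f) (hg : PowDecayBound n b B g) :
    PowDecayBound (m + n) (a * b) (A * B) (fun s => f s * g s) := by
  intro s
  obtain ⟨hf₁, hf₂⟩ := hf s
  obtain ⟨hg₁, hg₂⟩ := hg s
  rw [abs_mul]
  refine ⟨mul_le_mul hf₁ hg₁ (abs_nonneg _) ((abs_nonneg _).trans hf₁), ?_⟩
  calc |s| ^ (m + n) * (|f s| * |g s|) = (|s| ^ m * |f s|) * (|s| ^ n * |g s|) := by ring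
    _ ≤ A * B := mul_le_mul hf₂ hg₂ (by positivity) ((by positivity : (0:ℝ) ≤ _).trans hf₂)

lemma pow (hg : PowDecayBound n c C g) (k : ℕ) :
    PowDecayBound (n * k) (c ^ k) (C ^ k) (fun s => g s ^ k) := by
  induction k with
  | zero => intro s; simp
  | succ k ih => simpa only [Nat.mul_succ, pow_succ] using ih.mul hg

lemma add (hf : PowDecayBound n a A f) (hg : PowDecayBound n b B g) :
    PowDecayBound n (a + b) (A + B) (fun s => f s + g s) := by
  intro s
  obtain ⟨hf₁, hf₂⟩ := hf s
  obtain ⟨hg₁, hg₂⟩ := hg s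
  refine ⟨(abs_add_le _ _).trans (add_le_add hf₁ hg₁), ?_⟩
  calc |s| ^ n * |f s + g s| ≤ |s| ^ n * |f s| + |s| ^ n * |g s| := by
        rw [← mul_add]; exact mul_le_mul_of_nonneg_left (abs_add_le _ _) (by positivity)
    _ ≤ A + B := add_le_add hf₂ hg₂

lemma const_mul (hg : PowDecayBound n c C g) (r : ℝ) :
    PowDecayBound n (|r| * c) (|r| * C) (fun s => r * g s) := by
  intro s
  rw [abs_mul, mul_left_comm]
  exact ⟨mul_le_mul_of_nonneg_left (hg s).1 (abs_nonneg r),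
    mul_le_mul_of_nonneg_left (hg s).2 (abs_nonneg r)⟩

lemma div_const (hg : PowDecayBound n c C g) {r : ℝ} (hr : 0 < r) :
    PowDecayBound n (c / r) (C / r) (fun s => g s / r) := by
  simpa only [div_eq_inv_mul, abs_inv, abs_of_pos hr] using hg.const_mul r⁻¹

lemma comp_div (hg : PowDecayBound n c C g) {r : ℝ} (hr : 0 < r) :
    PowDecayBound n c (r ^ n * C) (fun t => g (t / r)) := by
  intro t
  refine ⟨(hg (t / r)).1, ?_⟩
  calc |t| ^ n * |g (t / r)| = r ^ n * (|t / r| ^ n * |g (t / r)|) := by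
        rw [abs_div, abs_of_pos hr, div_pow]; field_simp
    _ ≤ r ^ n * C := mul_le_mul_of_nonneg_left (hg (t / r)).2 (by positivity)

end PowDecayBound

open PowDecayBound

lemma powDecayBound_sinc : PowDecayBound 1 1 1 sinc := by
  refine of_abs_le_one (fun s _ => Real.abs_sinc_le_one s) fun s hs => ?_
  have hs0 : s ≠ 0 := by rintro rfl; norm_num at hs
  rw [pow_one, sinc_eq_real_sinc, Real.sinc_of_ne_zero hs0, abs_div,
    mul_div_cancel₀ _ (abs_ne_zero.2 hs0)]
  exact abs_sin_le_one s

lemma powDecayBound_sincDeriv : PowDecayBound 1 2 2 sincDeriv := by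
  refine of_abs_le_one (fun s hs => ?_) fun s hs => ?_
  · rcases eq_or_ne s 0 with rfl | hs0
    · simp [sincDeriv]
    rw [sincDeriv_of_ne_zero hs0, abs_div, abs_pow, div_le_iff₀ (by positivity)]
    nlinarith [abs_mul_cos_sub_sin_le hs, pow_nonneg (abs_nonneg s) 3]
  · have hs0 : s ≠ 0 := by rintro rfl; norm_num at hs
    rw [pow_one, ← abs_mul, sincDeriv_of_ne_zero hs0,
      show s * ((s * cos s - sin s) / s ^ 2) = cos s - sin s / s by field_simp]
    calc |cos s - sin s / s| ≤ |cos s| + |sin s / s| := abs_sub _ _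
      _ ≤ 1 + 1 := by
        gcongr
        · exact abs_cos_le_one s
        · exact Real.sinc_of_ne_zero hs0 ▸ Real.abs_sinc_le_one s
      _ = 2 := by norm_num

lemma powDecayBound_sincDeriv2 : PowDecayBound 1 3 3 sincDeriv2 := by
  refine of_abs_le_one (fun s hs => ?_) fun s hs => ?_
  · rcases eq_or_ne s 0 with rfl | hs0
    · norm_num [sincDeriv2]
    have hsplit : sincDeriv2 s = -(sin s / s) - 2 * ((s * cos s - sin s) / s ^ 3) := by
      rw [sincDeriv2_of_ne_zero hs0]; field_simp; ring
    have hcubic : |(s * cos s - sin s) / s ^ 3| ≤ 1 / 2 := by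
      rw [abs_div, abs_pow, div_le_iff₀ (by positivity)]
      linarith [abs_mul_cos_sub_sin_le hs]
    calc |sincDeriv2 s| ≤ |sin s / s| + |2 * ((s * cos s - sin s) / s ^ 3)| := by
          rw [hsplit, ← abs_neg (sin s / s)]; exact abs_sub _ _
      _ ≤ 1 + 2 * (1 / 2) := by
          rw [abs_mul, abs_two]
          gcongr
          exact Real.sinc_of_ne_zero hs0 ▸ Real.abs_sinc_le_one s
      _ ≤ 3 := by norm_num
  · have hs0 : s ≠ 0 := by rintro rfl; norm_num at hs
    have hs2 : 1 ≤ s ^ 2 := by rw [← sq_abs]; nlinarith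
    rw [pow_one, ← abs_mul, sincDeriv2_of_ne_zero hs0,
      show s * (((2 - s ^ 2) * sin s - 2 * s * cos s) / s ^ 3)
        = ((2 - s ^ 2) * sin s + (-2 * s) * cos s) / s ^ 2 by field_simp; ring,
      abs_div, abs_of_pos (by positivity : 0 < s ^ 2), div_le_iff₀ (by positivity),
      ← sq_le_sq₀ (abs_nonneg _) (by positivity), sq_abs]
    nlinarith [sq_mul_sin_add_mul_cos_le (2 - s ^ 2) (-2 * s) s]

noncomputable def sinc4 (t : ℝ) : ℝ := sinc (t / 4) ^ 4

noncomputable def sinc4Deriv (t : ℝ) : ℝ := sinc (t / 4) ^ 3 * sincDeriv (t / 4)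

noncomputable def sinc4Deriv2 (t : ℝ) : ℝ :=
  (3 * sinc (t / 4) ^ 2 * sincDeriv (t / 4) ^ 2 + sinc (t / 4) ^ 3 * sincDeriv2 (t / 4)) / 4

lemma hasDerivAt_sinc4 (t : ℝ) : HasDerivAt sinc4 (sinc4Deriv t) t := by
  unfold sinc4
  refine (((hasDerivAt_sinc _).comp t ((hasDerivAt_id' t).div_const 4)).fun_pow 4).congr_deriv ?_
  rw [sinc4Deriv, Function.comp_apply]
  ring

lemma hasDerivAt_sinc4Deriv (t : ℝ) : HasDerivAt sinc4Deriv (sinc4Deriv2 t) t := by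
  unfold sinc4Deriv
  have hdiv := (hasDerivAt_id' t).div_const (4 : ℝ)
  refine ((((hasDerivAt_sinc _).comp t hdiv).fun_pow 3).mul
    ((hasDerivAt_sincDeriv _).comp t hdiv)).congr_deriv ?_
  simp only [sinc4Deriv2, Function.comp_apply]
  ring

lemma powDecayBound_sinc4 : PowDecayBound 4 1 256 sinc4 :=
  ((powDecayBound_sinc.comp_div four_pos).pow 4).mono (by norm_num) (by norm_num)

lemma powDecayBound_sinc4Deriv : PowDecayBound 4 2 512 sinc4Deriv :=
  (((powDecayBound_sinc.comp_div four_pos).pow 3).mul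
    (powDecayBound_sincDeriv.comp_div four_pos)).mono (by norm_num) (by norm_num)

lemma powDecayBound_sinc4Deriv2 : PowDecayBound 4 4 1024 sinc4Deriv2 := by
  have hsinc := powDecayBound_sinc.comp_div four_pos
  have h := ((((hsinc.pow 2).const_mul 3).mul
    ((powDecayBound_sincDeriv.comp_div four_pos).pow 2)).add
    ((hsinc.pow 3).mul (powDecayBound_sincDeriv2.comp_div four_pos))).div_const four_pos
  exact h.mono (by norm_num) (by norm_num)

section ProdApply

variable {ι : Type*}

lemma hasDerivAt_update_family [DecidableEq ι] {f f' f'' : ι → ℝ → ℝ}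
    (hf : ∀ i t, HasDerivAt (f i) (f' i t) t) (hf' : ∀ i t, HasDerivAt (f' i) (f'' i t) t)
    (i j : ι) (t : ℝ) : HasDerivAt (update f i (f' i) j) (update f' i (f'' i) j t) t := by
  rcases eq_or_ne j i with rfl | hji
  · simpa using hf' j t
  · simpa [update_of_ne hji] using hf j t

variable [Fintype ι] [DecidableEq ι]

lemma prod_update_apply (f : ι → ℝ → ℝ) (i : ι) (g : ℝ → ℝ) (x : ι → ℝ) :
    ∏ j, update f i g j (x j) = g (x i) * ∏ j ∈ Finset.univ.erase i, f j (x j) := by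
  simp only [apply_update (fun k (φ : ℝ → ℝ) => φ (x k)),
    Finset.prod_update_of_mem (Finset.mem_univ i), Finset.sdiff_singleton_eq_erase]

lemma hasFDerivAt_prod_apply {f f' : ι → ℝ → ℝ} {x : EuclideanSpace ℝ ι}
    (hf : ∀ i, HasDerivAt (f i) (f' i (x i)) (x i)) :
    HasFDerivAt (fun y : EuclideanSpace ℝ ι => ∏ i, f i (y i))
      (∑ i, (∏ j, update f i (f' i) j (x j)) • EuclideanSpace.proj (𝕜 := ℝ) i) x := by
  have h := HasFDerivAt.finsetProd (u := Finset.univ) (x := x)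
    (g := fun i (y : EuclideanSpace ℝ ι) => f i (y i))
    (g' := fun i => f' i (x i) • EuclideanSpace.proj (𝕜 := ℝ) i)
    fun i _ => (hf i).comp_hasFDerivAt x (EuclideanSpace.proj (𝕜 := ℝ) i).hasFDerivAt
  refine h.congr_fderiv (Finset.sum_congr rfl fun i _ => ?_)
  rw [smul_smul, prod_update_apply, mul_comm]

lemma fderiv_prod_apply_single {f f' : ι → ℝ → ℝ} {x : EuclideanSpace ℝ ι}
    (hf : ∀ i, HasDerivAt (f i) (f' i (x i)) (x i)) (u : ι) :
    fderiv ℝ (fun y : EuclideanSpace ℝ ι => ∏ i, f i (y i)) x (EuclideanSpace.single u 1) =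
      ∏ j, update f u (f' u) j (x j) := by
  rw [(hasFDerivAt_prod_apply hf).fderiv]
  simp

lemma iteratedFDeriv_two_prod_apply_single {f f' f'' : ι → ℝ → ℝ}
    (hf : ∀ i t, HasDerivAt (f i) (f' i t) t) (hf' : ∀ i t, HasDerivAt (f' i) (f'' i t) t)
    (x : EuclideanSpace ℝ ι) (u v : ι) :
    iteratedFDeriv ℝ 2 (fun y : EuclideanSpace ℝ ι => ∏ i, f i (y i)) x
        ![EuclideanSpace.single u 1, EuclideanSpace.single v 1] =
      ∏ j, update (update f v (f' v)) u (update f' v (f'' v) u) j (x j) := by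
  set F := fun y : EuclideanSpace ℝ ι => ∏ i, f i (y i)
  have hupd := hasDerivAt_update_family hf hf'
  have hF : fderiv ℝ F =
      fun y => ∑ i, (∏ j, update f i (f' i) j (y j)) • EuclideanSpace.proj (𝕜 := ℝ) i :=
    funext fun y => (hasFDerivAt_prod_apply fun i => hf i (y i)).fderiv
  have hF_diff : DifferentiableAt ℝ (fderiv ℝ F) x := by
    rw [hF]
    exact DifferentiableAt.fun_sum fun i _ =>
      (hasFDerivAt_prod_apply fun j => hupd i j (x j)).differentiableAt.smul_const _
  have hF_apply : (fun y => fderiv ℝ F y (EuclideanSpace.single v 1)) =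
      fun y : EuclideanSpace ℝ ι => ∏ j, update f v (f' v) j (y j) :=
    funext fun y => fderiv_prod_apply_single (fun i => hf i (y i)) v
  have hswap := DFunLike.congr_fun
    (fderiv_clm_apply hF_diff (differentiableAt_const (EuclideanSpace.single v (1 : ℝ))))
    (EuclideanSpace.single u 1)
  simp only [fderiv_const_apply, ContinuousLinearMap.comp_zero, zero_add,
    ContinuousLinearMap.flip_apply] at hswap
  rw [iteratedFDeriv_two_apply, Matrix.cons_val_zero, Matrix.cons_val_one, Matrix.cons_val_zero,
    ← hswap, hF_apply]
  exact fderiv_prod_apply_single (fun j => hupd v j (x j)) u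

end ProdApply

section ProdBound

variable {ι : Type*} {n : ℕ} {K : ℝ} {g : ι → ℝ → ℝ} {c : ι → ℝ}

lemma powDecayBound_update [DecidableEq ι] (hg : ∀ j, PowDecayBound n (c j) (K * c j) (g j))
    (i : ι) {gi : ℝ → ℝ} {ci : ℝ} (hgi : PowDecayBound n ci (K * ci) gi) (j : ι) :
    PowDecayBound n (update c i ci j) (K * update c i ci j) (update g i gi j) := by
  rcases eq_or_ne j i with rfl | hji
  · simpa using hgi
  · simpa [update_of_ne hji] using hg j

lemma EuclideanSpace.exists_norm_sq_le_card_mul_sq [Fintype ι] [Nonempty ι]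
    (x : EuclideanSpace ℝ ι) : ∃ i, ‖x‖ ^ 2 ≤ Fintype.card ι * x i ^ 2 := by
  obtain ⟨i, -, hi⟩ :=
    Finset.exists_max_image Finset.univ (fun i => x i ^ 2) Finset.univ_nonempty
  refine ⟨i, ?_⟩
  rw [EuclideanSpace.norm_sq_eq]
  simpa [sq_abs] using
    Finset.sum_le_card_nsmul Finset.univ (fun j => x j ^ 2) _ fun j _ => hi j (Finset.mem_univ j)

variable [Fintype ι]

lemma pow_abs_mul_abs_prod_apply_le (hg : ∀ j, PowDecayBound n (c j) (K * c j) (g j))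
    (x : ι → ℝ) (i : ι) : |x i| ^ n * |∏ j, g j (x j)| ≤ K * ∏ j, c j := by
  classical
  rw [← Finset.mul_prod_erase _ _ (Finset.mem_univ i),
    ← Finset.mul_prod_erase _ c (Finset.mem_univ i), abs_mul, Finset.abs_prod, ← mul_assoc,
    ← mul_assoc]
  exact mul_le_mul (hg i (x i)).2
    (Finset.prod_le_prod (fun j _ => abs_nonneg _) fun j _ => (hg j (x j)).1)
    (Finset.prod_nonneg fun j _ => abs_nonneg _)
    ((by positivity : (0:ℝ) ≤ _).trans (hg i (x i)).2)

lemma abs_prod_apply_le (m : ℕ) (hg : ∀ j, PowDecayBound (2 * m) (c j) (K * c j) (g j))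
    {x : EuclideanSpace ℝ ι} (hx : x ≠ 0) :
    |∏ j, g j (x j)| ≤ K * (∏ j, c j) * Fintype.card ι ^ m / ‖x‖ ^ (2 * m) := by
  obtain ⟨i₀, -⟩ : ∃ i, x i ≠ 0 := by
    by_contra! h0
    exact hx (by ext i; simp [h0])
  have : Nonempty ι := ⟨i₀⟩
  obtain ⟨i, hi⟩ := EuclideanSpace.exists_norm_sq_le_card_mul_sq x
  have hnorm : ‖x‖ ^ (2 * m) ≤ Fintype.card ι ^ m * |x i| ^ (2 * m) := by
    rw [pow_mul, pow_mul, sq_abs, ← mul_pow]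
    exact pow_le_pow_left₀ (by positivity) hi m
  have hprod := pow_abs_mul_abs_prod_apply_le hg x i
  rw [le_div_iff₀ (by positivity)]
  calc |∏ j, g j (x j)| * ‖x‖ ^ (2 * m)
      ≤ |∏ j, g j (x j)| * (Fintype.card ι ^ m * |x i| ^ (2 * m)) :=
        mul_le_mul_of_nonneg_left hnorm (abs_nonneg _)
    _ = Fintype.card ι ^ m * (|x i| ^ (2 * m) * |∏ j, g j (x j)|) := by ring
    _ ≤ Fintype.card ι ^ m * (K * ∏ j, c j) := mul_le_mul_of_nonneg_left hprod (by positivity)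
    _ = K * (∏ j, c j) * Fintype.card ι ^ m := by ring

end ProdBound

theorem stmt_12_general (d : ℕ) (h : EuclideanSpace ℝ (Fin d)) (hne : h ≠ 0) :
    Psi1 d h ≤ 256 * (d : ℝ) ^ 2 / ‖h‖ ^ 4 ∧
    (∀ u : Fin d, |iteratedFDeriv ℝ 1 (Psi1 d) h ![EuclideanSpace.single u (1 : ℝ)]| ≤
      512 * (d : ℝ) ^ 2 / ‖h‖ ^ 4) ∧
    (∀ u v : Fin d, |iteratedFDeriv ℝ 2 (Psi1 d) h
        ![EuclideanSpace.single u (1 : ℝ), EuclideanSpace.single v (1 : ℝ)]| ≤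
      1024 * (d : ℝ) ^ 2 / ‖h‖ ^ 4) := by
  have hPsi : Psi1 d = fun y => ∏ i, (fun _ : Fin d => sinc4) i (y i) := rfl
  have hf : ∀ (i : Fin d) t, HasDerivAt ((fun _ => sinc4) i) ((fun _ => sinc4Deriv) i t) t :=
    fun _ => hasDerivAt_sinc4
  have hf' : ∀ (i : Fin d) t,
      HasDerivAt ((fun _ => sinc4Deriv) i) ((fun _ => sinc4Deriv2) i t) t :=
    fun _ => hasDerivAt_sinc4Deriv
  have hb : ∀ i : Fin d, PowDecayBound (2 * 2) ((fun _ => 1) i) (256 * (fun _ => 1) i) sinc4 :=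
    fun _ => powDecayBound_sinc4.mono le_rfl (by norm_num)
  have hb1 : PowDecayBound (2 * 2) 2 (256 * 2) sinc4Deriv :=
    powDecayBound_sinc4Deriv.mono le_rfl (by norm_num)
  have hb2 : PowDecayBound (2 * 2) 4 (256 * 4) sinc4Deriv2 :=
    powDecayBound_sinc4Deriv2.mono le_rfl (by norm_num)
  refine ⟨?_, fun u => ?_, fun u v => ?_⟩
  · refine (le_abs_self _).trans ((abs_prod_apply_le 2 hb hne).trans_eq ?_)
    simp
  · rw [iteratedFDeriv_one_apply, Matrix.cons_val_zero, hPsi,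
      fderiv_prod_apply_single fun i => hf i (h i)]
    refine (abs_prod_apply_le 2 (powDecayBound_update hb u hb1) hne).trans_eq ?_
    norm_num [Finset.prod_update_of_mem]
  · rw [hPsi, iteratedFDeriv_two_prod_apply_single hf hf']
    rcases eq_or_ne u v with rfl | huv
    · rw [update_idem, update_self]
      refine (abs_prod_apply_le 2 (powDecayBound_update hb u hb2) hne).trans_eq ?_
      norm_num [Finset.prod_update_of_mem]
    · rw [update_of_ne huv]
      refine (abs_prod_apply_le 2
        (powDecayBound_update (powDecayBound_update hb v hb1) u hb1) hne).trans_eq ?_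
      norm_num [Finset.prod_update_of_mem, huv.symm]

theorem stmt_12 (d : ℕ) (hd : 1 ≤ d) (h : EuclideanSpace ℝ (Fin d)) (hne : h ≠ 0) :
    Psi1 d h ≤ 256 * (d : ℝ) ^ 2 / ‖h‖ ^ 4 ∧
    (∀ u : Fin d, |iteratedFDeriv ℝ 1 (Psi1 d) h ![EuclideanSpace.single u (1 : ℝ)]| ≤
      512 * (d : ℝ) ^ 2 / ‖h‖ ^ 4) ∧
    (∀ u v : Fin d, |iteratedFDeriv ℝ 2 (Psi1 d) h
        ![EuclideanSpace.single u (1 : ℝ), EuclideanSpace.single v (1 : ℝ)]| ≤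
      1024 * (d : ℝ) ^ 2 / ‖h‖ ^ 4) :=
  stmt_12_general d h hne
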